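/- Let n ∈ ℤ_{≥0}^r with n ≠ 0. The following are equivalent: (1) n is normal, i.e. det M_n ≠ 0; (2) every type I* multiple orthogonal polynomial (Λ*_1,…,Λ*_r) for n satisfies Σ_{j=1}^r ⟨Λ*_j, 1⟩_j ≠ 0; (3) there exists a unique type I* multiple orthogonal polynomial (Λ*_1,…,Λ*_r) for n with Σ_{j=1}^r ⟨Λ*_j, 1⟩_j = 1. -/

import Mathlib

open MeasureTheory Polynomial

noncomputable section

/-- A system of measures on the unit circle: each `μ j` is a probability measure,
carried by the unit circle `∂𝔻 = {z : |z| = 1}`, with infinite support. -/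
def MopucSystem {r : ℕ} (μ : Fin r → Measure ℂ) : Prop :=
  ∀ j, IsProbabilityMeasure (μ j) ∧ μ j ((Metric.sphere (0 : ℂ) 1)ᶜ) = 0 ∧
    ∀ s : Set ℂ, s.Finite → μ j (sᶜ) ≠ 0

/-- The inner product `⟨P, Q⟩_μ = ∫ P(z)·conj (Q(z)) dμ(z)`. -/
def pip (μ : Measure ℂ) (P Q : Polynomial ℂ) : ℂ :=
  ∫ z, P.eval z * (starRingEnd ℂ) (Q.eval z) ∂μ

/-- `⟨P, z^p⟩_μ`. -/
def mip (μ : Measure ℂ) (P : Polynomial ℂ) (p : ℕ) : ℂ :=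
  pip μ P (X ^ p)

/-- The moment `ν^p = ∫ z^p dμ(z)` for `p ∈ ℤ` (on the circle `z^{-m} = conj (z^m)`). -/
def mom (μ : Measure ℂ) (p : ℤ) : ℂ :=
  ∫ z, z ^ p ∂μ

/-- The linear position of the pair `(j, q)` (with `q < n j`): `(∑_{i<j} n i) + q`.
This enumerates the pairs, in lexicographic order, by `0, 1, …, |n| − 1`. -/
def linIdx {r : ℕ} (n : Fin r → ℕ) (c : (j : Fin r) × Fin (n j)) : ℕ :=
  (∑ i ∈ Finset.univ.filter (fun i => i < c.1), n i) + (c.2 : ℕ)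

/-- The moment matrix `M_n`: rows are indexed by pairs `(j, q)` with `1 ≤ j ≤ r`,
`0 ≤ q ≤ n j − 1`, columns by `p = 0, …, |n| − 1` (realized as pairs via the
order-preserving enumeration `linIdx`), and the entry at `((j,q), p)` is `ν_j^{p−q}`. -/
def Mmat {r : ℕ} (μ : Fin r → Measure ℂ) (n : Fin r → ℕ) :
    Matrix ((j : Fin r) × Fin (n j)) ((j : Fin r) × Fin (n j)) ℂ :=
  Matrix.of fun rq c => mom (μ rq.1) ((linIdx n c : ℤ) - ((rq.2 : ℕ) : ℤ))

/-- The index `n` is normal if `det M_n ≠ 0`.  (For `n = 0` the matrix is empty and its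
determinant is `1`, so `n = 0` is normal, matching the convention of the paper.) -/
def NormalIndex {r : ℕ} (μ : Fin r → Measure ℂ) (n : Fin r → ℕ) : Prop :=
  (Mmat μ n).det ≠ 0

/-- A type II multiple orthogonal polynomial for the multi-index `n`. -/
def IsTypeII {r : ℕ} (μ : Fin r → Measure ℂ) (n : Fin r → ℕ) (P : Polynomial ℂ) : Prop :=
  P ≠ 0 ∧ P.degree ≤ ((∑ j, n j : ℕ) : WithBot ℕ) ∧
    ∀ j, ∀ p : ℕ, p < n j → mip (μ j) P p = 0

/-- A type II* multiple orthogonal polynomial for the multi-index `n`. -/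
def IsTypeIIStar {r : ℕ} (μ : Fin r → Measure ℂ) (n : Fin r → ℕ) (P : Polynomial ℂ) : Prop :=
  P ≠ 0 ∧ P.degree ≤ ((∑ j, n j : ℕ) : WithBot ℕ) ∧
    ∀ j, ∀ p : ℕ, 1 ≤ p → p ≤ n j → mip (μ j) P p = 0

/-- A type I multiple orthogonal polynomial for the multi-index `n`:
a nonzero vector of polynomials with `deg (L j) ≤ n j − 1` (so `L j = 0` when `n j = 0`),
and `∑_j ⟨L j, z^p⟩_j = 0` for `p = 0, …, |n| − 2`. -/
def IsTypeI {r : ℕ} (μ : Fin r → Measure ℂ) (n : Fin r → ℕ) (L : Fin r → Polynomial ℂ) : Prop :=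
  L ≠ 0 ∧ (∀ j, (L j).degree < ((n j : ℕ) : WithBot ℕ)) ∧
    ∀ p : ℕ, p + 2 ≤ ∑ j, n j → ∑ j, mip (μ j) (L j) p = 0

/-- A type I* multiple orthogonal polynomial for the multi-index `n`:
a nonzero vector of polynomials with `deg (L j) ≤ n j − 1`,
and `∑_j ⟨L j, z^p⟩_j = 0` for `p = 1, …, |n| − 1`. -/
def IsTypeIStar {r : ℕ} (μ : Fin r → Measure ℂ) (n : Fin r → ℕ) (L : Fin r → Polynomial ℂ) : Prop :=
  L ≠ 0 ∧ (∀ j, (L j).degree < ((n j : ℕ) : WithBot ℕ)) ∧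
    ∀ p : ℕ, 1 ≤ p → p + 1 ≤ ∑ j, n j → ∑ j, mip (μ j) (L j) p = 0

/-- `Φ_n`: the monic type II polynomial of degree exactly `|n|`. -/
def IsPhi {r : ℕ} (μ : Fin r → Measure ℂ) (n : Fin r → ℕ) (P : Polynomial ℂ) : Prop :=
  IsTypeII μ n P ∧ P.Monic ∧ P.natDegree = ∑ j, n j

/-- `Φ*_n`: the type II* polynomial with `Φ*_n(0) = 1`. -/
def IsPhiStar {r : ℕ} (μ : Fin r → Measure ℂ) (n : Fin r → ℕ) (P : Polynomial ℂ) : Prop :=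
  IsTypeIIStar μ n P ∧ P.eval 0 = 1

/-- `Λ_n`: the type I vector normalized by `∑_j ⟨Λ_{n,j}, z^{|n|−1}⟩_j = 1`. -/
def IsLambda {r : ℕ} (μ : Fin r → Measure ℂ) (n : Fin r → ℕ) (L : Fin r → Polynomial ℂ) : Prop :=
  IsTypeI μ n L ∧ ∑ j, mip (μ j) (L j) ((∑ i, n i) - 1) = 1

/-- `Λ*_n`: the type I* vector normalized by `∑_j ⟨Λ*_{n,j}, 1⟩_j = 1`. -/
def IsLambdaStar {r : ℕ} (μ : Fin r → Measure ℂ) (n : Fin r → ℕ) (L : Fin r → Polynomial ℂ) : Prop :=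
  IsTypeIStar μ n L ∧ ∑ j, mip (μ j) (L j) 0 = 1

/-- The multi-index `n + e_k`. -/
def eAdd {r : ℕ} (n : Fin r → ℕ) (k : Fin r) : Fin r → ℕ :=
  Function.update n k (n k + 1)

/-- The multi-index `n − e_k` (used only when `n k ≥ 1`). -/
def eSub {r : ℕ} (n : Fin r → ℕ) (k : Fin r) : Fin r → ℕ :=
  Function.update n k (n k - 1)

section AuxNTS

variable {r : ℕ}

lemma linIdx_lt_of_fst_lt {n : Fin r → ℕ} {j j' : Fin r} (q : Fin (n j)) (q' : Fin (n j'))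
    (h : j < j') : linIdx n ⟨j, q⟩ < linIdx n ⟨j', q'⟩ := by
  classical
  have hsub : insert j (Finset.univ.filter (fun i => i < j))
      ⊆ Finset.univ.filter (fun i => i < j') := by
    intro i hi
    simp only [Finset.mem_insert, Finset.mem_filter, Finset.mem_univ, true_and] at hi ⊢
    rcases hi with rfl | hi
    · exact h
    · exact hi.trans h
  have hnotmem : j ∉ Finset.univ.filter (fun i => i < j) := by simp
  have h1 : (∑ i ∈ Finset.univ.filter (fun i => i < j), n i) + n j
      ≤ ∑ i ∈ Finset.univ.filter (fun i => i < j'), n i := by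
    have h2 := Finset.sum_le_sum_of_subset (f := n) hsub
    rwa [Finset.sum_insert hnotmem, add_comm] at h2
  have h2 : (q : ℕ) < n j := q.isLt
  simp only [linIdx]
  omega

lemma linIdx_lt (n : Fin r → ℕ) (c : (j : Fin r) × Fin (n j)) :
    linIdx n c < ∑ j, n j := by
  classical
  obtain ⟨j, q⟩ := c
  have hnotmem : j ∉ Finset.univ.filter (fun i => i < j) := by simp
  have h1 : (∑ i ∈ Finset.univ.filter (fun i => i < j), n i) + n j ≤ ∑ i, n i := by
    have h2 := Finset.sum_le_sum_of_subset (f := n)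
      (Finset.subset_univ (insert j (Finset.univ.filter (fun i => i < j))))
    rwa [Finset.sum_insert hnotmem, add_comm] at h2
  have h2 : (q : ℕ) < n j := q.isLt
  simp only [linIdx]
  omega

lemma linIdx_injective (n : Fin r → ℕ) : Function.Injective (linIdx n) := by
  rintro ⟨j, q⟩ ⟨j', q'⟩ h
  rcases lt_trichotomy j j' with h1 | h1 | h1
  · exact absurd h (ne_of_lt (linIdx_lt_of_fst_lt q q' h1))
  · subst h1
    simp only [linIdx] at h
    have hq : (q : ℕ) = (q' : ℕ) := by omega
    exact congrArg (Sigma.mk j) (Fin.ext hq)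
  · exact absurd h.symm (ne_of_lt (linIdx_lt_of_fst_lt q' q h1))

lemma linIdx_surj (n : Fin r → ℕ) {p : ℕ} (hp : p < ∑ j, n j) :
    ∃ c, linIdx n c = p := by
  classical
  have hbij : Function.Bijective
      (fun c : (j : Fin r) × Fin (n j) => (⟨linIdx n c, linIdx_lt n c⟩ : Fin (∑ j, n j))) := by
    rw [Fintype.bijective_iff_injective_and_card]
    refine ⟨fun c c' h => linIdx_injective n (by simpa [Fin.ext_iff] using h), ?_⟩
    simp [Fintype.card_sigma]
  obtain ⟨c, hc⟩ := hbij.2 ⟨p, hp⟩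
  exact ⟨c, by simpa [Fin.ext_iff] using hc⟩

lemma mopuc_ae_sphere {μ : Fin r → Measure ℂ} (hμ : MopucSystem μ) (j : Fin r) :
    ∀ᵐ z ∂(μ j), ‖z‖ = 1 := by
  have h : ∀ᵐ z ∂(μ j), z ∈ Metric.sphere (0 : ℂ) 1 :=
    MeasureTheory.mem_ae_iff.mpr (hμ j).2.1
  filter_upwards [h] with z hz
  simpa using hz

lemma measurable_zpow' (m : ℤ) : Measurable fun z : ℂ => z ^ m := by
  cases m with
  | ofNat k => simpa using (measurable_id (α := ℂ)).pow_const k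
  | negSucc k => simpa [zpow_negSucc] using ((measurable_id (α := ℂ)).pow_const (k + 1))

lemma integrable_of_ae_norm_eq_one {μ : Measure ℂ} [IsProbabilityMeasure μ] {f : ℂ → ℂ}
    (hf : Measurable f) (h : ∀ᵐ z ∂μ, ‖f z‖ = 1) : Integrable f μ := by
  refine Integrable.mono' (integrable_const 1) hf.aestronglyMeasurable ?_
  filter_upwards [h] with z hz
  rw [hz]

lemma conj_mom {μ : Fin r → Measure ℂ} (hμ : MopucSystem μ) (j : Fin r) (m : ℤ) :
    (starRingEnd ℂ) (mom (μ j) m) = mom (μ j) (-m) := by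
  unfold mom
  rw [← integral_conj]
  apply integral_congr_ae
  filter_upwards [mopuc_ae_sphere hμ j] with z hz
  rw [← RCLike.inv_eq_conj (by rw [norm_zpow, hz, one_zpow]), zpow_neg]

lemma integral_pow_conj {μ : Fin r → Measure ℂ} (hμ : MopucSystem μ) (j : Fin r) (q p : ℕ) :
    ∫ z, z ^ q * (starRingEnd ℂ) (z ^ p) ∂(μ j) = mom (μ j) ((q : ℤ) - p) := by
  unfold mom
  apply integral_congr_ae
  filter_upwards [mopuc_ae_sphere hμ j] with z hz
  have hz0 : z ≠ 0 := by
    intro h; rw [h] at hz; simp at hz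
  have hconj : (starRingEnd ℂ) (z ^ p) = z ^ (-(p : ℤ)) := by
    rw [← RCLike.inv_eq_conj (by rw [norm_pow, hz, one_pow]), zpow_neg, zpow_natCast]
  rw [hconj, ← zpow_natCast z q, ← zpow_add₀ hz0, sub_eq_add_neg]

lemma mip_eq_sum {μ : Fin r → Measure ℂ} (hμ : MopucSystem μ) (j : Fin r) {m : ℕ}
    {P : Polynomial ℂ} (hP : P.degree < (m : WithBot ℕ)) (p : ℕ) :
    mip (μ j) P p = ∑ q ∈ Finset.range m, P.coeff q * mom (μ j) ((q : ℤ) - p) := by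
  have hprob : IsProbabilityMeasure (μ j) := (hμ j).1
  by_cases hP0 : P = 0
  · simp [hP0, mip, pip]
  have hdeg : P.natDegree < m := (Polynomial.natDegree_lt_iff_degree_lt hP0).mpr hP
  unfold mip pip
  have heval : ∀ z : ℂ, P.eval z * (starRingEnd ℂ) ((X ^ p : Polynomial ℂ).eval z)
      = ∑ q ∈ Finset.range m, P.coeff q * (z ^ q * (starRingEnd ℂ) (z ^ p)) := by
    intro z
    rw [Polynomial.eval_pow, Polynomial.eval_X, Polynomial.eval_eq_sum_range' hdeg,
      Finset.sum_mul]
    exact Finset.sum_congr rfl fun q _ => by ring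
  simp_rw [heval]
  rw [integral_finset_sum]
  · exact Finset.sum_congr rfl fun q _ => by
      rw [MeasureTheory.integral_const_mul, integral_pow_conj hμ j q p]
  · intro q _
    apply Integrable.const_mul
    apply integrable_of_ae_norm_eq_one
    · exact ((measurable_id (α := ℂ)).pow_const q).mul
        (RCLike.continuous_conj.measurable.comp ((measurable_id (α := ℂ)).pow_const p))
    · filter_upwards [mopuc_ae_sphere hμ j] with z hz
      simp [norm_mul, hz]

/-- The coefficient vector of a vector of polynomials. -/
def vecOf {r : ℕ} (n : Fin r → ℕ) (L : Fin r → Polynomial ℂ) :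
    ((j : Fin r) × Fin (n j)) → ℂ :=
  fun rq => (starRingEnd ℂ) ((L rq.1).coeff rq.2)

/-- The vector of polynomials with given coefficient vector. -/
def Lof {r : ℕ} (n : Fin r → ℕ) (v : ((j : Fin r) × Fin (n j)) → ℂ) (j : Fin r) :
    Polynomial ℂ :=
  ∑ q : Fin (n j), Polynomial.C ((starRingEnd ℂ) (v ⟨j, q⟩)) * Polynomial.X ^ (q : ℕ)

lemma Lof_coeff {n : Fin r → ℕ} (v : ((j : Fin r) × Fin (n j)) → ℂ) (j : Fin r) (q : ℕ) :
    (Lof n v j).coeff q =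
      if h : q < n j then (starRingEnd ℂ) (v ⟨j, ⟨q, h⟩⟩) else 0 := by
  unfold Lof
  rw [Polynomial.finset_sum_coeff]
  simp_rw [Polynomial.coeff_C_mul, Polynomial.coeff_X_pow]
  split_ifs with h
  · rw [Finset.sum_eq_single (⟨q, h⟩ : Fin (n j))]
    · simp
    · intro b _ hb
      rw [if_neg, mul_zero]
      intro hq
      exact hb (Fin.ext hq.symm)
    · simp
  · apply Finset.sum_eq_zero
    intro q' _
    rw [if_neg, mul_zero]
    intro hq
    exact h (hq ▸ q'.isLt)

lemma Lof_degree {n : Fin r → ℕ} (v : ((j : Fin r) × Fin (n j)) → ℂ) (j : Fin r) :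
    (Lof n v j).degree < ((n j : ℕ) : WithBot ℕ) := by
  apply lt_of_le_of_lt (Polynomial.degree_sum_le _ _)
  rw [Finset.sup_lt_iff (WithBot.bot_lt_coe _)]
  intro q _
  apply lt_of_le_of_lt (Polynomial.degree_C_mul_X_pow_le _ _)
  exact_mod_cast q.isLt

lemma vecOf_Lof {n : Fin r → ℕ} (v : ((j : Fin r) × Fin (n j)) → ℂ) :
    vecOf n (Lof n v) = v := by
  funext rq
  obtain ⟨j, q⟩ := rq
  simp [vecOf, Lof_coeff, q.isLt]

lemma Lof_ne_zero {n : Fin r → ℕ} {v : ((j : Fin r) × Fin (n j)) → ℂ} (hv : v ≠ 0) :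
    Lof n v ≠ 0 := by
  intro h
  apply hv
  have := congrArg (vecOf n) h
  rw [vecOf_Lof] at this
  rw [this]
  funext rq
  simp [vecOf]

lemma poly_ext_of_coeff {m : ℕ} {P Q : Polynomial ℂ} (hP : P.degree < (m : WithBot ℕ))
    (hQ : Q.degree < (m : WithBot ℕ)) (h : ∀ q < m, P.coeff q = Q.coeff q) : P = Q := by
  ext q
  by_cases hq : q < m
  · exact h q hq
  · have hm : (m : WithBot ℕ) ≤ (q : WithBot ℕ) := by exact_mod_cast Nat.le_of_not_lt hq
    rw [Polynomial.coeff_eq_zero_of_degree_lt (lt_of_lt_of_le hP hm),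
      Polynomial.coeff_eq_zero_of_degree_lt (lt_of_lt_of_le hQ hm)]

/-- The key bridge: the transpose moment matrix applied to the coefficient vector
computes (conjugates of) the sums `∑_j ⟨L j, z^p⟩_j`. -/
lemma mulVec_vecOf {μ : Fin r → Measure ℂ} {n : Fin r → ℕ} (hμ : MopucSystem μ)
    (L : Fin r → Polynomial ℂ) (hdeg : ∀ j, (L j).degree < ((n j : ℕ) : WithBot ℕ))
    (c : (j : Fin r) × Fin (n j)) :
    (Mmat μ n).transpose.mulVec (vecOf n L) c
      = (starRingEnd ℂ) (∑ j, mip (μ j) (L j) (linIdx n c)) := by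
  rw [map_sum]
  have hterm : ∀ j, (starRingEnd ℂ) (mip (μ j) (L j) (linIdx n c))
      = ∑ q ∈ Finset.range (n j),
          (starRingEnd ℂ) ((L j).coeff q) * mom (μ j) ((linIdx n c : ℤ) - q) := by
    intro j
    rw [mip_eq_sum hμ j (hdeg j), map_sum]
    refine Finset.sum_congr rfl fun q _ => ?_
    rw [map_mul, conj_mom hμ j]
    congr 1
    ring
  simp_rw [hterm]
  have hlhs : (Mmat μ n).transpose.mulVec (vecOf n L) c
      = ∑ rq : (j : Fin r) × Fin (n j),
          mom (μ rq.1) ((linIdx n c : ℤ) - (rq.2 : ℕ)) * (starRingEnd ℂ) ((L rq.1).coeff rq.2) := by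
    simp [Matrix.mulVec, dotProduct, Matrix.transpose_apply, Mmat, vecOf]
  rw [hlhs, ← Finset.univ_sigma_univ, Finset.sum_sigma]
  refine Finset.sum_congr rfl fun j _ => ?_
  rw [← Fin.sum_univ_eq_sum_range
    (fun q => (starRingEnd ℂ) ((L j).coeff q) * mom (μ j) ((linIdx n c : ℤ) - q)) (n j)]
  exact Finset.sum_congr rfl fun q _ => mul_comm _ _

lemma conj_eq_zero {x : ℂ} (h : (starRingEnd ℂ) x = 0) : x = 0 := by
  simpa using congrArg (starRingEnd ℂ) h

lemma sum_mip_smul_zero {μ : Fin r → Measure ℂ} {L : Fin r → Polynomial ℂ}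
    (hL : L = 0) (p : ℕ) : ∑ j, mip (μ j) (L j) p = 0 := by
  subst hL
  simp [mip, pip]

end AuxNTS
/-- for `n ≠ 0`, normality is equivalent to: every type I* MOP `(Λ*_1,…,Λ*_r)`
for `n` satisfies `∑_j ⟨Λ*_j, 1⟩_j ≠ 0`; and to: there is a unique type I* MOP for `n`
with `∑_j ⟨Λ*_j, 1⟩_j = 1`. -/
theorem normality_typeIStar (r : ℕ) (hr : 0 < r) (μ : Fin r → Measure ℂ) (hμ : MopucSystem μ)
    (n : Fin r → ℕ) (hn : n ≠ 0) :
    (NormalIndex μ n ↔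
      ∀ L : Fin r → Polynomial ℂ, IsTypeIStar μ n L →
        ∑ j, mip (μ j) (L j) 0 ≠ 0) ∧
    (NormalIndex μ n ↔
      ∃! L : Fin r → Polynomial ℂ, IsTypeIStar μ n L ∧
        ∑ j, mip (μ j) (L j) 0 = 1) := by
  classical
  have hNpos : 0 < ∑ j, n j := by
    rcases Function.ne_iff.mp hn with ⟨j, hj⟩
    exact lt_of_lt_of_le (Nat.pos_of_ne_zero hj)
      (Finset.single_le_sum (fun _ _ => Nat.zero_le _) (Finset.mem_univ j))
  obtain ⟨c₀, hc₀⟩ := linIdx_surj n hNpos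
  set T := (Mmat μ n).transpose with hT
  have key := fun (L : Fin r → Polynomial ℂ) hdeg c => mulVec_vecOf (n := n) hμ L hdeg c
  -- (1) ⇒ (2)
  have impl1 : NormalIndex μ n →
      ∀ L, IsTypeIStar μ n L → ∑ j, mip (μ j) (L j) 0 ≠ 0 := by
    intro hN L hL hsum
    obtain ⟨hL0, hdeg, horth⟩ := hL
    have hunit : IsUnit T.det := by
      rw [hT, Matrix.det_transpose]
      exact isUnit_iff_ne_zero.mpr hN
    have hvec0 : T.mulVec (vecOf n L) = 0 := by
      funext c
      show T.mulVec (vecOf n L) c = 0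
      rw [key L hdeg c]
      rcases Nat.eq_zero_or_pos (linIdx n c) with h | h
      · rw [h, hsum, map_zero]
      · rw [horth (linIdx n c) h (linIdx_lt n c), map_zero]
    have hv : vecOf n L = 0 := by
      have h1 := congrArg (fun w => T⁻¹.mulVec w) hvec0
      simpa [Matrix.mulVec_mulVec, Matrix.nonsing_inv_mul _ hunit] using h1
    apply hL0
    funext j
    apply poly_ext_of_coeff (hdeg j)
      (show (0 : Polynomial ℂ).degree < ((n j : ℕ) : WithBot ℕ) by
        rw [Polynomial.degree_zero]
        exact_mod_cast WithBot.bot_lt_coe (n j))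
    intro q hq
    have := congrFun hv ⟨j, ⟨q, hq⟩⟩
    simp only [vecOf, Pi.zero_apply] at this
    simpa [Polynomial.coeff_zero] using conj_eq_zero this
  -- (2) ⇒ (1)
  have impl2 : (∀ L, IsTypeIStar μ n L → ∑ j, mip (μ j) (L j) 0 ≠ 0) →
      NormalIndex μ n := by
    intro h2
    by_contra hdet
    rw [NormalIndex, not_not] at hdet
    have hdetT : T.det = 0 := by rw [hT, Matrix.det_transpose]; exact hdet
    obtain ⟨v, hv0, hvz⟩ := Matrix.exists_mulVec_eq_zero_iff.mpr hdetT
    set L := Lof n v with hLdef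
    have hdeg : ∀ j, (L j).degree < ((n j : ℕ) : WithBot ℕ) := fun j => Lof_degree v j
    have hvecL : vecOf n L = v := vecOf_Lof v
    have hall : ∀ c : (j : Fin r) × Fin (n j), ∑ j, mip (μ j) (L j) (linIdx n c) = 0 := by
      intro c
      apply conj_eq_zero
      rw [← key L hdeg c, hvecL, hvz]
      rfl
    have hIsT : IsTypeIStar μ n L := by
      refine ⟨Lof_ne_zero hv0, hdeg, ?_⟩
      intro p hp1 hp2
      obtain ⟨c, hc⟩ := linIdx_surj n (show p < ∑ j, n j by omega)
      rw [← hc]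
      exact hall c
    exact h2 L hIsT (by rw [← hc₀]; exact hall c₀)
  -- (1) ⇒ (3)
  have impl3 : NormalIndex μ n →
      ∃! L, IsTypeIStar μ n L ∧ ∑ j, mip (μ j) (L j) 0 = 1 := by
    intro hN
    have hunit : IsUnit T.det := by
      rw [hT, Matrix.det_transpose]
      exact isUnit_iff_ne_zero.mpr hN
    set b : ((j : Fin r) × Fin (n j)) → ℂ := fun c => if c = c₀ then 1 else 0 with hbdef
    set v := T⁻¹.mulVec b with hvdef
    have hTv : T.mulVec v = b := by
      rw [hvdef, Matrix.mulVec_mulVec, Matrix.mul_nonsing_inv _ hunit, Matrix.one_mulVec]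
    set L := Lof n v with hLdef
    have hdeg : ∀ j, (L j).degree < ((n j : ℕ) : WithBot ℕ) := fun j => Lof_degree v j
    have hvecL : vecOf n L = v := vecOf_Lof v
    have hval : ∀ c : (j : Fin r) × Fin (n j),
        (starRingEnd ℂ) (∑ j, mip (μ j) (L j) (linIdx n c)) = b c := by
      intro c
      rw [← key L hdeg c, hvecL, hTv]
    have hsum1 : ∑ j, mip (μ j) (L j) 0 = 1 := by
      have h1 := hval c₀
      rw [hc₀] at h1
      simp only [hbdef, if_pos rfl] at h1
      have := congrArg (starRingEnd ℂ) h1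
      simpa using this
    have horth : ∀ p : ℕ, 1 ≤ p → p + 1 ≤ ∑ j, n j → ∑ j, mip (μ j) (L j) p = 0 := by
      intro p hp1 hp2
      obtain ⟨c, hc⟩ := linIdx_surj n (show p < ∑ j, n j by omega)
      have hcne : c ≠ c₀ := by
        intro h
        rw [h, hc₀] at hc
        omega
      have h1 := hval c
      rw [hc] at h1
      simp only [hbdef, if_neg hcne] at h1
      exact conj_eq_zero h1
    have hLne : L ≠ 0 := by
      intro h
      rw [sum_mip_smul_zero h 0] at hsum1
      exact one_ne_zero hsum1.symm
    refine ⟨L, ⟨⟨hLne, hdeg, horth⟩, hsum1⟩, ?_⟩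
    rintro L' ⟨⟨hL'0, hdeg', horth'⟩, hsum'⟩
    have hvec' : T.mulVec (vecOf n L') = b := by
      funext c
      rw [key L' hdeg' c]
      by_cases hc : linIdx n c = 0
      · have hcc : c = c₀ := linIdx_injective n (by rw [hc, hc₀])
        rw [hc, hsum', map_one, hbdef]
        simp [hcc]
      · have hcne : c ≠ c₀ := fun h => hc (h ▸ hc₀)
        rw [horth' _ (Nat.pos_of_ne_zero hc) (by have := linIdx_lt n c; omega), map_zero,
          hbdef]
        simp [hcne]
    have hveq : vecOf n L' = v := by
      have h1 := congrArg (fun w => T⁻¹.mulVec w) (hvec'.trans hTv.symm)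
      simpa [Matrix.mulVec_mulVec, Matrix.nonsing_inv_mul _ hunit] using h1
    funext j
    apply poly_ext_of_coeff (hdeg' j) (hdeg j)
    intro q hq
    have h1 := congrFun hveq ⟨j, ⟨q, hq⟩⟩
    have h2 := congrFun hvecL ⟨j, ⟨q, hq⟩⟩
    have h3 : (starRingEnd ℂ) ((L' j).coeff q) = (starRingEnd ℂ) ((L j).coeff q) := by
      rw [show (starRingEnd ℂ) ((L' j).coeff q) = vecOf n L' ⟨j, ⟨q, hq⟩⟩ from rfl, h1, ← h2]
      rfl
    have := congrArg (starRingEnd ℂ) h3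
    simpa using this
  -- (3) ⇒ (1)
  have impl4 : (∃! L, IsTypeIStar μ n L ∧ ∑ j, mip (μ j) (L j) 0 = 1) →
      NormalIndex μ n := by
    rintro ⟨L, ⟨⟨hL0, hdeg, horth⟩, hsum⟩, huniq⟩
    by_contra hdet
    rw [NormalIndex, not_not] at hdet
    have hdetT : T.det = 0 := by rw [hT, Matrix.det_transpose]; exact hdet
    obtain ⟨w, hw0, hwz⟩ := Matrix.exists_mulVec_eq_zero_iff.mpr hdetT
    set L' := fun j => L j + Lof n w j with hL'def
    have hdeg' : ∀ j, (L' j).degree < ((n j : ℕ) : WithBot ℕ) := by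
      intro j
      exact lt_of_le_of_lt (Polynomial.degree_add_le _ _) (max_lt (hdeg j) (Lof_degree w j))
    have hvec' : vecOf n L' = vecOf n L + w := by
      funext rq
      have h1 := congrFun (vecOf_Lof (n := n) w) rq
      simp only [vecOf, hL'def, Polynomial.coeff_add, map_add, Pi.add_apply]
      rw [show (starRingEnd ℂ) ((Lof n w rq.1).coeff rq.2) = vecOf n (Lof n w) rq from rfl, h1]
    have hsame : ∀ p : ℕ, p < ∑ j, n j →
        ∑ j, mip (μ j) (L' j) p = ∑ j, mip (μ j) (L j) p := by
      intro p hp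
      obtain ⟨c, hc⟩ := linIdx_surj n hp
      have h1 := key L' hdeg' c
      have h2 := key L hdeg c
      rw [hvec', Matrix.mulVec_add, hwz, add_zero, h2] at h1
      have := congrArg (starRingEnd ℂ) h1.symm
      simpa [hc] using this
    have hsum' : ∑ j, mip (μ j) (L' j) 0 = 1 := by rw [hsame 0 hNpos, hsum]
    have hL'ne : L' ≠ 0 := by
      intro h
      rw [sum_mip_smul_zero h 0] at hsum'
      exact one_ne_zero hsum'.symm
    have hIsT' : IsTypeIStar μ n L' := by
      refine ⟨hL'ne, hdeg', ?_⟩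
      intro p hp1 hp2
      rw [hsame p (by omega)]
      exact horth p hp1 hp2
    have heq := huniq L' ⟨hIsT', hsum'⟩
    apply hw0
    have h1 := congrArg (vecOf n) heq
    rw [hvec'] at h1
    funext rq
    have := congrFun h1 rq
    simp only [Pi.add_apply] at this
    have h2 : vecOf n L rq + w rq = vecOf n L rq + 0 := by rw [this, add_zero]
    exact add_left_cancel h2
  exact ⟨⟨impl1, impl2⟩, ⟨impl3, impl4⟩⟩
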